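/- Let G be a connected graph with n vertices and L a list-assignment with |L(v)| ≥ deg(v)+1 for all vertices v and |L(w)| ≥ deg(w)+2 for some vertex w. Then any two proper L-colourings of G are connected by a sequence of at most (3n² + 5n)/2 single-vertex recolourings. -/

import Mathlib

/-- A proper list colouring. -/
def properL {V : Type*} (G : SimpleGraph V) (L : V → Finset ℕ) (c : V → ℕ) : Prop :=
  (∀ v, c v ∈ L v) ∧ ∀ ⦃u w⦄, G.Adj u w → c u ≠ c w

/-- A single-vertex recolouring step between proper `L`-colourings. -/
def recolStep {V : Type*} (G : SimpleGraph V) (L : V → Finset ℕ) (c c' : V → ℕ) : Prop :=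
  properL G L c ∧ properL G L c' ∧ ∃ x, c x ≠ c' x ∧ ∀ u, u ≠ x → c u = c' u

/-!
Induction on the number of vertices. Let `w` have a spare colour and let `u` be a vertex
farthest from `w`. Some colour `a ∈ L u` occurs at most once in total on the neighbours of `u`
under `α` and under `β`. At most two cascades along shortest paths towards `w` free `a` around
`u`, so one colouring gives `u` the colour `a` within `2 dist(u, w) + 2 ≤ 2n` moves and the other
within one move. Deleting `u` and removing `a` from the lists of its neighbours leaves a connected
instance of the same kind on `n - 1` vertices, and
`3(n - 1)² + 5(n - 1) + 2(2n + 1) ≤ 3n² + 5n`.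
-/

open Function

section Recolouring

variable {V : Type*} {G : SimpleGraph V} {L : V → Finset ℕ} {c c' c'' : V → ℕ}

def RecolSeq (G : SimpleGraph V) (L : V → Finset ℕ) (k : ℕ) (c c' : V → ℕ) : Prop :=
  ∃ f : ℕ → V → ℕ, f 0 = c ∧ f k = c' ∧ ∀ i < k, recolStep G L (f i) (f (i + 1))

lemma RecolSeq.refl (c : V → ℕ) : RecolSeq G L 0 c c := ⟨fun _ => c, rfl, rfl, by simp⟩

lemma recolStep.recolSeq (h : recolStep G L c c') : RecolSeq G L 1 c c' :=
  ⟨fun i => if i = 0 then c else c', rfl, rfl, fun i hi => by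
    obtain rfl : i = 0 := by omega
    exact h⟩

lemma RecolSeq.trans {k₁ k₂ : ℕ} (h₁ : RecolSeq G L k₁ c c') (h₂ : RecolSeq G L k₂ c' c'') :
    RecolSeq G L (k₁ + k₂) c c'' := by
  obtain ⟨f₁, rfl, rfl, hf₁⟩ := h₁
  obtain ⟨f₂, hf₂, rfl, hf₂'⟩ := h₂
  set f : ℕ → V → ℕ := fun i => if i ≤ k₁ then f₁ i else f₂ (i - k₁)
  have hf : ∀ i, k₁ ≤ i → f i = f₂ (i - k₁) := by
    intro i hi
    rcases hi.eq_or_lt with rfl | hi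
    · simp [f, hf₂]
    · simp [f, hi.not_ge]
  refine ⟨f, by simp [f], by rw [hf _ (by omega), Nat.add_sub_cancel_left], fun i hi => ?_⟩
  rcases lt_or_ge i k₁ with hi₁ | hi₁
  · simpa [f, hi₁.le, Nat.succ_le_of_lt hi₁] using hf₁ i hi₁
  · rw [hf i hi₁, hf (i + 1) (by omega), Nat.sub_add_comm hi₁]
    exact hf₂' _ (by omega)

lemma recolStep.symm (h : recolStep G L c c') : recolStep G L c' c :=
  let ⟨hc, hc', x, hx, hother⟩ := h
  ⟨hc', hc, x, hx.symm, fun u hu => (hother u hu).symm⟩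

lemma RecolSeq.symm {k : ℕ} (h : RecolSeq G L k c c') : RecolSeq G L k c' c := by
  obtain ⟨f, rfl, rfl, hf⟩ := h
  refine ⟨fun i => f (k - i), by simp, by simp, fun i hi => ?_⟩
  have := (hf (k - (i + 1)) (by omega)).symm
  rwa [show k - (i + 1) + 1 = k - i by omega] at this

lemma RecolSeq.properL_right {k : ℕ} (h : RecolSeq G L k c c') (hc : properL G L c) :
    properL G L c' := by
  obtain ⟨f, rfl, rfl, hf⟩ := h
  cases k with
  | zero => exact hc
  | succ k => exact (hf k k.lt_succ_self).2.1

lemma RecolSeq.map {W : Type*} {H : SimpleGraph W} {M : W → Finset ℕ} {k : ℕ} {g g' : W → ℕ}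
    (φ : (W → ℕ) → V → ℕ) (hφ : ∀ g g', recolStep H M g g' → recolStep G L (φ g) (φ g'))
    (h : RecolSeq H M k g g') : RecolSeq G L k (φ g) (φ g') :=
  let ⟨f, hf0, hfk, hf⟩ := h
  ⟨φ ∘ f, by simp [hf0], by simp [hfk], fun i hi => hφ _ _ (hf i hi)⟩

lemma properL.update [DecidableEq V] (hc : properL G L c) {x : V} {a : ℕ} (ha : a ∈ L x)
    (hfree : ∀ y, G.Adj x y → c y ≠ a) : properL G L (update c x a) := by
  refine ⟨fun v => ?_, fun p q hpq => ?_⟩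
  · rcases eq_or_ne v x with rfl | hv
    · simpa using ha
    · simpa [hv] using hc.1 v
  · rcases eq_or_ne p x with rfl | hp
    · simpa [G.ne_of_adj hpq |>.symm] using (hfree q hpq).symm
    · rcases eq_or_ne q x with rfl | hq
      · simpa [hp] using hfree p hpq.symm
      · simpa [hp, hq] using hc.2 hpq

lemma recolStep_update [DecidableEq V] (hc : properL G L c) {x : V} {a : ℕ} (ha : a ∈ L x)
    (hcx : c x ≠ a) (hfree : ∀ y, G.Adj x y → c y ≠ a) : recolStep G L c (update c x a) :=
  ⟨hc, hc.update ha hfree, x, by simpa using hcx, fun u hu => by simp [hu]⟩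

lemma exists_recolSeq_update [DecidableEq V] (hc : properL G L c) {x : V} {a : ℕ}
    (ha : a ∈ L x) (hfree : ∀ y, G.Adj x y → c y ≠ a) :
    ∃ k ≤ 1, RecolSeq G L k c (update c x a) := by
  by_cases hcx : c x = a
  · exact ⟨0, zero_le_one, by simpa [← hcx] using RecolSeq.refl c⟩
  · exact ⟨1, le_rfl, (recolStep_update hc ha hcx hfree).recolSeq⟩

end Recolouring

namespace SimpleGraph

variable {V : Type*} {G : SimpleGraph V} {v w x y : V}

lemma Adj.dist_le_dist_add_one (h : G.Adj x y) (w : V) : G.dist x w ≤ G.dist y w + 1 := by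
  simpa [dist_eq_one_iff_adj.mpr h, add_comm] using h.reachable.dist_triangle_left w

lemma Reachable.exists_adj_dist_add_one_eq (h : G.Reachable v w) (hvw : v ≠ w) :
    ∃ v', G.Adj v v' ∧ G.dist v' w + 1 = G.dist v w := by
  obtain ⟨p, hp⟩ := h.exists_walk_length_eq_dist
  cases p with
  | nil => exact absurd rfl hvw
  | cons hadj q =>
    have := dist_le q
    have := hadj.dist_le_dist_add_one w
    exact ⟨_, hadj, by simp only [Walk.length_cons] at hp; omega⟩

lemma Connected.dist_lt_card [Finite V] (hG : G.Connected) (v w : V) :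
    G.dist v w < Nat.card V := by
  have := Fintype.ofFinite V
  obtain ⟨p, hp, hlen⟩ := hG.exists_path_of_dist v w
  simpa [hlen, Nat.card_eq_fintype_card] using hp.length_lt

end SimpleGraph

section Counting

variable {V : Type*} [Finite V] {G : SimpleGraph V} {L : V → Finset ℕ} {x : V}

lemma ncard_insert_neighborSet (G : SimpleGraph V) (x : V) :
    (insert x (G.neighborSet x)).ncard = (G.neighborSet x).ncard + 1 :=
  Set.ncard_insert_of_notMem (G.notMem_neighborSet_self)

lemma exists_free_colour_of_slack (hx : (G.neighborSet x).ncard + 2 ≤ (L x).card) (c : V → ℕ) :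
    ∃ a ∈ L x, c x ≠ a ∧ ∀ y, G.Adj x y → c y ≠ a := by
  have : (c '' insert x (G.neighborSet x)).ncard < (L x : Set ℕ).ncard := by
    have := Set.ncard_image_le (f := c) (s := insert x (G.neighborSet x))
    rw [ncard_insert_neighborSet] at this
    rw [Set.ncard_coe_finset]
    omega
  obtain ⟨a, ha, hused⟩ := Set.exists_mem_notMem_of_ncard_lt_ncard this
  exact ⟨a, ha, fun h => hused ⟨x, Set.mem_insert _ _, h⟩,
    fun y hy h => hused ⟨y, Set.mem_insert_of_mem _ hy, h⟩⟩

lemma exists_free_colour_or_injOn (hx : (G.neighborSet x).ncard + 1 ≤ (L x).card)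
    (c : V → ℕ) : (∃ a ∈ L x, c x ≠ a ∧ ∀ y, G.Adj x y → c y ≠ a) ∨
      ((∀ y, G.Adj x y → c y ∈ L x) ∧ Set.InjOn c (G.neighborSet x)) := by
  refine or_iff_not_imp_left.mpr fun hfree => ?_
  push Not at hfree
  set N := insert x (G.neighborSet x)
  have hsub : (L x : Set ℕ) ⊆ c '' N := by
    intro a ha
    by_cases hxa : c x = a
    · exact ⟨x, Set.mem_insert _ _, hxa⟩
    · obtain ⟨y, hy, rfl⟩ := hfree a ha hxa
      exact ⟨y, Set.mem_insert_of_mem _ hy, rfl⟩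
  have himage := Set.ncard_image_le (f := c) (s := N)
  have hlist := Set.ncard_le_ncard hsub
  rw [ncard_insert_neighborSet] at himage
  rw [Set.ncard_coe_finset] at hlist
  have heq : (L x : Set ℕ) = c '' N :=
    Set.eq_of_subset_of_ncard_le hsub (by rw [Set.ncard_coe_finset]; omega)
  have hinj : Set.InjOn c N :=
    Set.injOn_of_ncard_image_eq (by rw [ncard_insert_neighborSet]; omega)
  refine ⟨fun y hy => ?_, hinj.mono (Set.subset_insert _ _)⟩
  rw [← Finset.mem_coe, heq]
  exact ⟨y, Set.mem_insert_of_mem _ hy, rfl⟩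

end Counting

section Cascade

variable {V : Type*} {G : SimpleGraph V} {L : V → Finset ℕ} {w v : V} {c c' : V → ℕ}

def IsCascade (G : SimpleGraph V) (w v : V) (c c' : V → ℕ) : Prop :=
  c' v ≠ c v ∧ (∀ x, c' x ≠ c x → x = v ∨ G.dist x w < G.dist v w) ∧
    ∀ x y, c' x ≠ c x → c' y ≠ c y → G.dist x w = G.dist y w → x = y

lemma IsCascade.eq_of_dist_le (h : IsCascade G w v c c') {x : V} (hxv : x ≠ v)
    (hx : G.dist v w ≤ G.dist x w) : c' x = c x := by
  by_contra hne
  rcases h.2.1 x hne with rfl | hlt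
  · exact hxv rfl
  · omega

lemma isCascade_update [DecidableEq V] {a : ℕ} (ha : c v ≠ a) :
    IsCascade G w v c (update c v a) := by
  have hchanged : ∀ x, update c v a x ≠ c x → x = v := by
    intro x hx
    by_contra hxv
    simp [hxv] at hx
  exact ⟨by simpa using ha.symm, fun x hx => .inl (hchanged x hx),
    fun x y hx hy _ => (hchanged x hx).trans (hchanged y hy).symm⟩

lemma IsCascade.cons [DecidableEq V] {v' : V} (h : IsCascade G w v' c c')
    (hvv' : G.Adj v v') (hdist : G.dist v' w + 1 = G.dist v w) (hcv : c v ≠ c v') :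
    IsCascade G w v c (update c' v (c v')) := by
  have hchanged : ∀ x, update c' v (c v') x ≠ c x → x ≠ v →
      G.dist x w < G.dist v w := by
    intro x hx hxv
    rw [update_of_ne hxv] at hx
    rcases h.2.1 x hx with rfl | hlt <;> omega
  refine ⟨by simpa using hcv.symm, fun x hx => ?_, fun x y hx hy hxy => ?_⟩
  · by_cases hxv : x = v
    · exact .inl hxv
    · exact .inr (hchanged x hx hxv)
  · rcases eq_or_ne x v with hxv | hxv <;> rcases eq_or_ne y v with hyv | hyv
    · exact hxv.trans hyv.symm
    · have := hchanged y hy hyv; subst hxv; omega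
    · have := hchanged x hx hxv; subst hyv; omega
    · rw [update_of_ne hxv] at hx
      rw [update_of_ne hyv] at hy
      exact h.2.2 x y hx hy hxy

lemma recolStep_update_of_isCascade [DecidableEq V] {v' : V} (hc : properL G L c)
    (hc' : properL G L c') (h : IsCascade G w v' c c') (hvv' : G.Adj v v')
    (hdist : G.dist v' w + 1 = G.dist v w) (hmem : ∀ y, G.Adj v y → c y ∈ L v)
    (hinj : Set.InjOn c (G.neighborSet v)) :
    recolStep G L c' (update c' v (c v')) := by
  have hfixed : ∀ y, y ≠ v' → G.dist v w ≤ G.dist y w + 1 → c' y = c y := fun y hy hyd =>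
    h.eq_of_dist_le hy (by omega)
  refine recolStep_update hc' (hmem v' hvv') ?_ fun y hy => ?_
  · rw [hfixed v (G.ne_of_adj hvv') (by omega)]
    exact hc.2 hvv'
  · by_cases hyv' : y = v'
    · subst hyv'
      exact h.1
    · rw [hfixed y hyv' (hy.dist_le_dist_add_one w)]
      exact fun hyc => hyv' (hinj hy hvv' hyc)

/-- Cascade along a shortest path `v = q₀, q₁, …` towards `w`: the first `qᵢ` with a free colour
(`w` has one) takes it, then `qᵢ₋₁, …, q₀` in turn take the old colour of their successor. That
colour is free for `qⱼ` because a vertex without a free colour sees each colour of its list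
exactly once on its closed neighbourhood. -/
theorem exists_recolSeq_isCascade [Finite V] (hG : G.Connected)
    (h1 : ∀ v, (G.neighborSet v).ncard + 1 ≤ (L v).card)
    (hw : (G.neighborSet w).ncard + 2 ≤ (L w).card) (hc : properL G L c) (v : V) :
    ∃ k c', RecolSeq G L k c c' ∧ k ≤ G.dist v w + 1 ∧ IsCascade G w v c c' := by
  classical
  have free (v : V) (hv : ∃ a ∈ L v, c v ≠ a ∧ ∀ y, G.Adj v y → c y ≠ a) :
      ∃ k c', RecolSeq G L k c c' ∧ k ≤ G.dist v w + 1 ∧ IsCascade G w v c c' :=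
    let ⟨a, ha, hcv, hfree⟩ := hv
    ⟨1, _, (recolStep_update hc ha hcv hfree).recolSeq, by omega, isCascade_update hcv⟩
  obtain ⟨t, ht⟩ : ∃ t, G.dist v w = t := ⟨_, rfl⟩
  induction t generalizing v with
  | zero =>
    obtain rfl : v = w := hG.dist_eq_zero_iff.mp ht
    exact free v (exists_free_colour_of_slack hw c)
  | succ t ih =>
    rcases exists_free_colour_or_injOn (h1 v) c with hfree | ⟨hmem, hinj⟩
    · exact free v hfree
    obtain ⟨v', hvv', hdist⟩ :=
      (hG.preconnected v w).exists_adj_dist_add_one_eq (by rintro rfl; simp at ht)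
    obtain ⟨k, c', hseq, hk, hcasc⟩ := ih v' (by omega)
    have hstep := recolStep_update_of_isCascade hc (hseq.properL_right hc) hcasc hvv' hdist
      hmem hinj
    exact ⟨k + 1, _, hseq.trans hstep.recolSeq, by omega, hcasc.cons hvv' hdist (hc.2 hvv')⟩

end Cascade

section Averaging

variable {V : Type*} [Finite V] {G : SimpleGraph V} {L : V → Finset ℕ} {u : V}

open Finset in
/-- The `2 * deg u` colours that `α` and `β` use around `u` cannot hit every colour of `L u`
twice. -/
lemma exists_mem_ncard_add_ncard_le_one (hu : (G.neighborSet u).ncard + 1 ≤ (L u).card)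
    (α β : V → ℕ) : ∃ a ∈ L u,
      {x ∈ G.neighborSet u | α x = a}.ncard + {x ∈ G.neighborSet u | β x = a}.ncard ≤ 1 := by
  classical
  have := Fintype.ofFinite V
  set N := (G.neighborSet u).toFinset
  have hcount (γ : V → ℕ) (a : ℕ) :
      {x ∈ G.neighborSet u | γ x = a}.ncard = #{x ∈ N | γ x = a} := by
    rw [← Set.ncard_coe_finset]
    congr 1
    ext
    simp [N]
  have hsum (γ : V → ℕ) : ∑ a ∈ L u, #{x ∈ N | γ x = a} ≤ #N := by
    rw [sum_card_fiberwise_eq_card_filter]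
    exact card_filter_le _ _
  have hN : #N = (G.neighborSet u).ncard := (Set.ncard_eq_toFinset_card' _).symm
  obtain ⟨a, ha, hlt⟩ := exists_lt_of_sum_lt (s := L u) (g := fun _ => 2)
    (f := fun a => #{x ∈ N | α x = a} + #{x ∈ N | β x = a}) (by
      have := hsum α
      have := hsum β
      simp only [sum_add_distrib, sum_const, smul_eq_mul]
      omega)
  exact ⟨a, ha, by rw [hcount, hcount]; omega⟩

end Averaging

section FarVertex

variable {V : Type*} [Finite V] {G : SimpleGraph V} {L : V → Finset ℕ} {w u : V} {a : ℕ}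
  {c : V → ℕ}

lemma exists_recolSeq_nbhd_colour_closer (hG : G.Connected)
    (h1 : ∀ v, (G.neighborSet v).ncard + 1 ≤ (L v).card)
    (hw : (G.neighborSet w).ncard + 2 ≤ (L w).card) (hfar : ∀ x, G.dist x w ≤ G.dist u w)
    (hc : properL G L c) (hsub : {x ∈ G.neighborSet u | c x = a}.Subsingleton) {v : V}
    (hv : G.Adj u v) (hva : c v = a) :
    ∃ k c', RecolSeq G L k c c' ∧ k ≤ G.dist v w + 1 ∧
      {x ∈ G.neighborSet u | c' x = a}.Subsingleton ∧
      ∀ x, G.Adj u x → c' x = a → G.dist x w < G.dist v w := by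
  obtain ⟨k, c', hseq, hk, hcasc⟩ := exists_recolSeq_isCascade hG h1 hw hc v
  have hchanged : ∀ x, G.Adj u x → c' x = a → c' x ≠ c x := by
    rintro x hx hxa hxc
    obtain rfl : x = v := hsub ⟨hx, hxc ▸ hxa⟩ ⟨hv, hva⟩
    exact hcasc.1 (hxa.trans hva.symm)
  have hcloser : ∀ x, G.Adj u x → c' x = a → G.dist x w < G.dist v w := by
    intro x hx hxa
    rcases hcasc.2.1 x (hchanged x hx hxa) with rfl | hlt
    · exact absurd (hxa.trans hva.symm) hcasc.1
    · exact hlt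
  refine ⟨k, c', hseq, hk, fun x ⟨hx, hxa⟩ y ⟨hy, hya⟩ => ?_, hcloser⟩
  have := hcloser x hx hxa
  have := hcloser y hy hya
  have := hx.dist_le_dist_add_one w
  have := hy.dist_le_dist_add_one w
  have := hfar v
  exact hcasc.2.2 x y (hchanged x hx hxa) (hchanged y hy hya) (by omega)

/-- After the first cascade a neighbour of `u` coloured `a` lies at distance `dist u w - 1`
from `w`; after a second one, from it, there is none left. -/
lemma exists_recolSeq_eq_at_far_vertex (hG : G.Connected)
    (h1 : ∀ v, (G.neighborSet v).ncard + 1 ≤ (L v).card)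
    (hw : (G.neighborSet w).ncard + 2 ≤ (L w).card) (hfar : ∀ x, G.dist x w ≤ G.dist u w)
    (ha : a ∈ L u) (hc : properL G L c) (hsub : {x ∈ G.neighborSet u | c x = a}.Subsingleton) :
    ∃ k c', RecolSeq G L k c c' ∧ c' u = a ∧ k ≤ 2 * G.dist u w + 2 := by
  classical
  have finish (k : ℕ) (c' : V → ℕ) (hseq : RecolSeq G L k c c') (hk : k ≤ 2 * G.dist u w + 1)
      (hfree : ∀ x, G.Adj u x → c' x ≠ a) :
      ∃ k c', RecolSeq G L k c c' ∧ c' u = a ∧ k ≤ 2 * G.dist u w + 2 := by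
    obtain ⟨k', hk', hseq'⟩ := exists_recolSeq_update (hseq.properL_right hc) ha hfree
    exact ⟨k + k', _, hseq.trans hseq', by simp, by omega⟩
  by_cases h₀ : ∃ v, G.Adj u v ∧ c v = a
  swap
  · push Not at h₀
    exact finish 0 c (.refl c) (by omega) h₀
  obtain ⟨v, hv, hva⟩ := h₀
  obtain ⟨k₁, c₁, hseq₁, hk₁, hsub₁, hcloser₁⟩ :=
    exists_recolSeq_nbhd_colour_closer hG h1 hw hfar hc hsub hv hva
  have := hfar v
  by_cases h₁ : ∃ x, G.Adj u x ∧ c₁ x = a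
  swap
  · push Not at h₁
    exact finish k₁ c₁ hseq₁ (by omega) h₁
  obtain ⟨x, hx, hxa⟩ := h₁
  have := hcloser₁ x hx hxa
  obtain ⟨k₂, c₂, hseq₂, hk₂, -, hcloser₂⟩ :=
    exists_recolSeq_nbhd_colour_closer hG h1 hw hfar (hseq₁.properL_right hc) hsub₁ hx hxa
  refine finish (k₁ + k₂) c₂ (hseq₁.trans hseq₂) (by omega) fun y hy hya => ?_
  have := hcloser₂ y hy hya
  have := hy.dist_le_dist_add_one w
  omega

lemma exists_recolSeq_pair_eq_at_far_vertex (hG : G.Connected)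
    (h1 : ∀ v, (G.neighborSet v).ncard + 1 ≤ (L v).card)
    (hw : (G.neighborSet w).ncard + 2 ≤ (L w).card) (hfar : ∀ x, G.dist x w ≤ G.dist u w)
    (ha : a ∈ L u) {α β : V → ℕ} (hα : properL G L α) (hβ : properL G L β)
    (hcount :
      {x ∈ G.neighborSet u | α x = a}.ncard + {x ∈ G.neighborSet u | β x = a}.ncard ≤ 1) :
    ∃ kα kβ α' β', RecolSeq G L kα α α' ∧ RecolSeq G L kβ β β' ∧ α' u = a ∧ β' u = a ∧
      kα + kβ ≤ 2 * G.dist u w + 3 := by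
  classical
  have fix (γ : V → ℕ) (hγ : properL G L γ) (h : {x ∈ G.neighborSet u | γ x = a}.ncard ≤ 1) :
      ∃ k γ', RecolSeq G L k γ γ' ∧ γ' u = a ∧ k ≤ 2 * G.dist u w + 2 :=
    exists_recolSeq_eq_at_far_vertex hG h1 hw hfar ha hγ (Set.ncard_le_one_iff_subsingleton.mp h)
  have fix₀ (γ : V → ℕ) (hγ : properL G L γ) (h : {x ∈ G.neighborSet u | γ x = a}.ncard = 0) :
      ∃ k γ', RecolSeq G L k γ γ' ∧ γ' u = a ∧ k ≤ 1 := by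
    have hfree : ∀ x, G.Adj u x → γ x ≠ a := fun x hx hxa => by
      simpa using ((Set.ncard_eq_zero).mp h).subset ⟨hx, hxa⟩
    obtain ⟨k, hk, hseq⟩ := exists_recolSeq_update hγ ha hfree
    exact ⟨k, _, hseq, by simp, hk⟩
  by_cases h₀ : {x ∈ G.neighborSet u | α x = a}.ncard = 0
  · obtain ⟨kα, α', hα'⟩ := fix₀ α hα h₀
    obtain ⟨kβ, β', hβ'⟩ := fix β hβ (by omega)
    exact ⟨kα, kβ, α', β', hα'.1, hβ'.1, hα'.2.1, hβ'.2.1, by omega⟩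
  · obtain ⟨kα, α', hα'⟩ := fix α hα (by omega)
    obtain ⟨kβ, β', hβ'⟩ := fix₀ β hβ (by omega)
    exact ⟨kα, kβ, α', β', hα'.1, hβ'.1, hα'.2.1, hβ'.2.1, by omega⟩

end FarVertex

section DeleteVertex

variable {V : Type*} {G : SimpleGraph V} {L : V → Finset ℕ} {u : V} {a : ℕ}

/-- The lists of `G - u` once `u` keeps the colour `a`: the neighbours of `u` lose `a`. -/
def restrictLists (G : SimpleGraph V) [DecidableRel G.Adj] (L : V → Finset ℕ) (u : V) (a : ℕ)
    (x : ({u}ᶜ : Set V)) : Finset ℕ :=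
  if G.Adj u x then (L x).erase a else L x

def extendColouring [DecidableEq V] (u : V) (a : ℕ) (g : ({u}ᶜ : Set V) → ℕ) (x : V) : ℕ :=
  if h : x = u then a else g ⟨x, h⟩

lemma ncard_neighborSet_induce_add_le [DecidableRel G.Adj] [Finite V] {x : ({u}ᶜ : Set V)}
    {m : ℕ} (h : (G.neighborSet x).ncard + m ≤ (L x).card) :
    ((G.induce {u}ᶜ).neighborSet x).ncard + m ≤ (restrictLists G L u a x).card := by
  rw [SimpleGraph.neighborSet_induce, ← Set.ncard_image_of_injective _ Subtype.val_injective,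
    Set.image_preimage_eq_inter_range, Subtype.range_coe, ← Set.sdiff_eq, restrictLists]
  split_ifs with hux
  · have hu : u ∈ G.neighborSet x := hux.symm
    have := Finset.pred_card_le_card_erase (s := L x) (a := a)
    have := (Set.ncard_pos).mpr ⟨u, hu⟩
    rw [Set.ncard_sdiff_singleton_of_mem hu]
    omega
  · rwa [Set.sdiff_singleton_eq_self fun hu => hux hu.symm]

lemma properL_extendColouring [DecidableEq V] [DecidableRel G.Adj] (ha : a ∈ L u)
    {g : ({u}ᶜ : Set V) → ℕ} (hg : properL (G.induce {u}ᶜ) (restrictLists G L u a) g) :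
    properL G L (extendColouring u a g) := by
  have hmem (x : ({u}ᶜ : Set V)) : g x ∈ L x := by
    have := hg.1 x
    unfold restrictLists at this
    split_ifs at this
    exacts [Finset.mem_of_mem_erase this, this]
  have hne (x : ({u}ᶜ : Set V)) (hux : G.Adj u x) : g x ≠ a := by
    have := hg.1 x
    simp only [restrictLists, if_pos hux] at this
    exact Finset.ne_of_mem_erase this
  refine ⟨fun x => ?_, fun x y hxy => ?_⟩
  · unfold extendColouring
    split_ifs with hx
    exacts [hx ▸ ha, hmem _]
  · unfold extendColouring
    split_ifs with hx hy hy
    · exact absurd (hx.trans hy.symm) (G.ne_of_adj hxy)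
    · exact (hne ⟨y, hy⟩ (hx ▸ hxy)).symm
    · exact hne ⟨x, hx⟩ (hy ▸ hxy.symm)
    · exact hg.2 (show G.Adj x y from hxy)

lemma recolStep_extendColouring [DecidableEq V] [DecidableRel G.Adj] (ha : a ∈ L u)
    {g g' : ({u}ᶜ : Set V) → ℕ} (h : recolStep (G.induce {u}ᶜ) (restrictLists G L u a) g g') :
    recolStep G L (extendColouring u a g) (extendColouring u a g') := by
  obtain ⟨hg, hg', x, hx, hother⟩ := h
  refine ⟨properL_extendColouring ha hg, properL_extendColouring ha hg', x, ?_, fun y hy => ?_⟩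
  · have hxu : (x : V) ≠ u := x.2
    simpa [extendColouring, hxu] using hx
  · unfold extendColouring
    split_ifs with hyu
    · rfl
    · exact hother ⟨y, hyu⟩ fun h => hy (congrArg Subtype.val h)

lemma properL_restrict [DecidableRel G.Adj] {γ : V → ℕ} (hγ : properL G L γ) (hγu : γ u = a) :
    properL (G.induce {u}ᶜ) (restrictLists G L u a) fun x => γ x := by
  refine ⟨fun x => ?_, fun x y hxy => hγ.2 hxy⟩
  unfold restrictLists
  split_ifs with hux
  · exact Finset.mem_erase.mpr ⟨fun h => hγ.2 hux (hγu.trans h.symm), hγ.1 x⟩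
  · exact hγ.1 x

lemma extendColouring_restrict [DecidableEq V] {γ : V → ℕ} (hγu : γ u = a) :
    extendColouring u a (fun x => γ x) = γ := by
  ext x
  unfold extendColouring
  split_ifs with hx
  exacts [hx ▸ hγu.symm, rfl]

lemma SimpleGraph.Connected.induce_compl_singleton_of_forall_dist_le (hG : G.Connected)
    {w : V} (hfar : ∀ x, G.dist x w ≤ G.dist u w) (huw : u ≠ w) :
    (G.induce {u}ᶜ).Connected := by
  have hreach (t : ℕ) : ∀ x : ({u}ᶜ : Set V), G.dist x w = t →
      (G.induce {u}ᶜ).Reachable x ⟨w, huw.symm⟩ := by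
    induction t with
    | zero =>
      intro x hx
      obtain rfl : x = ⟨w, huw.symm⟩ := Subtype.ext (hG.dist_eq_zero_iff.mp hx)
      rfl
    | succ t ih =>
      intro x hx
      obtain ⟨y, hxy, hy⟩ := (hG.preconnected x w).exists_adj_dist_add_one_eq
        fun h => by simp [h] at hx
      have hyu : y ≠ u := by
        rintro rfl
        have := hfar x
        omega
      exact (show (G.induce {u}ᶜ).Adj x ⟨y, hyu⟩ from hxy).reachable.trans
        (ih ⟨y, hyu⟩ (show G.dist y w = t by omega))
  have : Nonempty ({u}ᶜ : Set V) := ⟨⟨w, huw.symm⟩⟩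
  exact ⟨fun x y => (hreach _ x rfl).trans (hreach _ y rfl).symm⟩

end DeleteVertex

lemma exists_recolSeq_of_subsingleton {V : Type*} [Subsingleton V] {G : SimpleGraph V}
    {L : V → Finset ℕ} {α β : V → ℕ} (hα : properL G L α) (hβ : properL G L β) :
    ∃ k ≤ 1, RecolSeq G L k α β := by
  by_cases hαβ : α = β
  · exact ⟨0, zero_le_one, hαβ ▸ .refl α⟩
  · obtain ⟨x, hx⟩ := Function.ne_iff.mp hαβ
    exact ⟨1, le_rfl, recolStep.recolSeq
      ⟨hα, hβ, x, hx, fun y hy => absurd (Subsingleton.elim y x) hy⟩⟩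

theorem exists_recolSeq_two_mul_le {V : Type*} [Finite V] {G : SimpleGraph V}
    (hG : G.Connected) {L : V → Finset ℕ}
    (h1 : ∀ v, (G.neighborSet v).ncard + 1 ≤ (L v).card)
    (h2 : ∃ w, (G.neighborSet w).ncard + 2 ≤ (L w).card) {α β : V → ℕ}
    (hα : properL G L α) (hβ : properL G L β) :
    ∃ k, RecolSeq G L k α β ∧ 2 * k ≤ 3 * Nat.card V ^ 2 + 5 * Nat.card V := by
  classical
  obtain ⟨n, hn⟩ : ∃ n, Nat.card V = n := ⟨_, rfl⟩
  induction n using Nat.strong_induction_on generalizing V with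
  | _ n ih =>
  have := hG.nonempty
  have hn₀ : 0 < n := hn ▸ Nat.card_pos
  rcases subsingleton_or_nontrivial V with _ | _
  · obtain ⟨k, hk, hseq⟩ := exists_recolSeq_of_subsingleton hα hβ
    exact ⟨k, hseq, by rw [hn]; nlinarith⟩
  obtain ⟨w, hw⟩ := h2
  obtain ⟨u, hfar⟩ := Finite.exists_max fun x => G.dist x w
  have huw : u ≠ w := by
    rintro rfl
    obtain ⟨x, hxu⟩ := exists_ne u
    exact hxu (hG.dist_eq_zero_iff.mp (by simpa using hfar x))
  obtain ⟨a, ha, hcount⟩ := exists_mem_ncard_add_ncard_le_one (h1 u) α β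
  obtain ⟨kα, kβ, α', β', hseqα, hseqβ, hα', hβ', hk⟩ :=
    exists_recolSeq_pair_eq_at_far_vertex hG h1 hw hfar ha hα hβ hcount
  have hcard : Nat.card ({u}ᶜ : Set V) = n - 1 := by
    rw [Nat.card_coe_set_eq, Set.ncard_compl, Set.ncard_singleton, hn]
  obtain ⟨k, hseq, hk'⟩ := ih (n - 1) (by omega)
    (hG.induce_compl_singleton_of_forall_dist_le hfar huw)
    (fun x => ncard_neighborSet_induce_add_le (h1 x))
    ⟨⟨w, huw.symm⟩, ncard_neighborSet_induce_add_le hw⟩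
    (properL_restrict (hseqα.properL_right hα) hα')
    (properL_restrict (hseqβ.properL_right hβ) hβ') hcard
  have hlift := hseq.map (extendColouring u a) fun _ _ => recolStep_extendColouring ha
  rw [extendColouring_restrict hα', extendColouring_restrict hβ'] at hlift
  refine ⟨kα + k + kβ, (hseqα.trans hlift).trans hseqβ.symm, ?_⟩
  have := hG.dist_lt_card u w
  obtain ⟨m, rfl⟩ : ∃ m, n = m + 1 := ⟨n - 1, by omega⟩
  rw [hcard, Nat.add_sub_cancel] at hk'
  rw [hn]
  nlinarith

theorem stmt6 {V : Type*} [Fintype V] (G : SimpleGraph V) (hG : G.Connected)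
    (L : V → Finset ℕ)
    (h1 : ∀ v, (G.neighborSet v).ncard + 1 ≤ (L v).card)
    (h2 : ∃ w, (G.neighborSet w).ncard + 2 ≤ (L w).card)
    (α β : V → ℕ) (hα : properL G L α) (hβ : properL G L β) :
    ∃ (k : ℕ) (f : ℕ → V → ℕ),
      2 * k ≤ 3 * (Fintype.card V) ^ 2 + 5 * Fintype.card V ∧
      f 0 = α ∧ f k = β ∧ ∀ i < k, recolStep G L (f i) (f (i + 1)) := by
  obtain ⟨k, ⟨f, hf0, hfk, hf⟩, hk⟩ := exists_recolSeq_two_mul_le hG h1 h2 hα hβ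
  exact ⟨k, f, Fintype.card_eq_nat_card (α := V) ▸ hk, hf0, hfk, hf⟩
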